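/- Consider the cardinality constraint with ℓ = (N - Δ)/2 and u = (N + Δ)/2 for 0 ≤ Δ ≤ N (with N, Δ of equal parity). In the large-N counting of quantum regions (grouping the partial sums in the guaranteed-feasible interval [ℓ, u - (N - i)] into one region whenever nonempty), the maximum number of quantum regions over all links is N - Δ when Δ ≥ N/3 and (N + Δ)/2 when Δ ≤ N/3; in particular the maximum over Δ of this quantity equals 2N/3, attained at Δ = N/3. -/

import Mathlib

/-!
With `ℓ = (N - Δ)/2` and `u = (N + Δ)/2`, at a link `t ≤ N` the guaranteed interval always lies
inside the feasible one, and the count simplifies to the concave piecewise-linear function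
`t - 2 (t - u)⁺ - (t - (N - Δ))⁺`. It is bounded both by `N - Δ` and by `u`, and equals `t` up to
the first breakpoint `min (N - Δ) u`, so its maximum over the links is `min (N - Δ) u`; the two
branches of the stated formula are the two cases of this minimum, which as a function of `Δ` peaks
where `N - Δ = (N + Δ)/2`, i.e. at `Δ = N/3`.
-/

/-- Continuum (large-N) count of quantum regions at link t for the cardinality
constraint ℓ ≤ ∑ x_i ≤ u with ℓ = (N-Δ)/2, u = (N+Δ)/2: the number of feasible
partial-sum values outside the guaranteed-feasible interval [ℓ, u-(N-t)], i.e. the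
length of the feasible interval [max(0, ℓ-(N-t)), min(t,u)] minus the length of its
intersection with the guaranteed interval (which counts as a single region, an O(1)
contribution ignored in the large-N limit). -/
noncomputable def qcount (N Δ t : ℝ) : ℝ :=
  let ℓ := (N - Δ) / 2
  let u := (N + Δ) / 2
  let fLo := max 0 (ℓ - (N - t))
  let fHi := min t u
  let gHi := u - (N - t)
  (fHi - fLo) - max 0 (min fHi gHi - max fLo ℓ)

lemma qcount_eq {N Δ t : ℝ} (hΔN : Δ ≤ N) (htN : t ≤ N) :
    qcount N Δ t = t - 2 * max 0 (t - (N + Δ) / 2) - max 0 (t - (N - Δ)) := by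
  have hLo : max (max 0 ((N - Δ) / 2 - (N - t))) ((N - Δ) / 2) = (N - Δ) / 2 :=
    max_eq_right (max_le (by linarith) (by linarith))
  have hHi : min (min t ((N + Δ) / 2)) ((N + Δ) / 2 - (N - t)) = (N + Δ) / 2 - (N - t) :=
    min_eq_right (le_min (by linarith) (by linarith))
  have hFeasible : min t ((N + Δ) / 2) - max 0 ((N - Δ) / 2 - (N - t)) =
      t - 2 * max 0 (t - (N + Δ) / 2) := by
    rcases le_total t ((N + Δ) / 2) with h | h
    · rw [min_eq_left h, max_eq_left (by linarith), max_eq_left (by linarith)]; ring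
    · rw [min_eq_right h, max_eq_right (by linarith), max_eq_right (by linarith)]; ring
  simp only [qcount, hLo, hHi, hFeasible]
  ring_nf

lemma qcount_le_min {N Δ t : ℝ} (hΔN : Δ ≤ N) (htN : t ≤ N) :
    qcount N Δ t ≤ min (N - Δ) ((N + Δ) / 2) := by
  rw [qcount_eq hΔN htN]
  have := le_max_left 0 (t - (N + Δ) / 2)
  have := le_max_right 0 (t - (N + Δ) / 2)
  have := le_max_left 0 (t - (N - Δ))
  have := le_max_right 0 (t - (N - Δ))
  exact le_min (by linarith) (by linarith)

lemma qcount_min_eq {N Δ : ℝ} (hΔN : Δ ≤ N) :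
    qcount N Δ (min (N - Δ) ((N + Δ) / 2)) = min (N - Δ) ((N + Δ) / 2) := by
  rw [qcount_eq hΔN (min_le_of_right_le (by linarith)),
    max_eq_left (by linarith [min_le_right (N - Δ) ((N + Δ) / 2)]),
    max_eq_left (by linarith [min_le_left (N - Δ) ((N + Δ) / 2)])]
  ring

lemma isGreatest_qcount_image {N Δ : ℝ} (h0 : 0 ≤ Δ) (hΔN : Δ ≤ N) :
    IsGreatest (qcount N Δ '' Set.Icc 0 N) (min (N - Δ) ((N + Δ) / 2)) := by
  refine ⟨⟨_, ⟨le_min (by linarith) (by linarith), min_le_of_right_le (by linarith)⟩,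
    qcount_min_eq hΔN⟩, ?_⟩
  rintro _ ⟨t, ⟨-, htN⟩, rfl⟩
  exact qcount_le_min hΔN htN

lemma isGreatest_min_image {N : ℝ} (hN : 0 ≤ N) :
    IsGreatest ((fun d => min (N - d) ((N + d) / 2)) '' Set.Icc 0 N) (2 * N / 3) := by
  refine ⟨⟨N / 3, ⟨by linarith, by linarith⟩, ?_⟩, ?_⟩
  · show min _ _ = _
    rw [min_eq_left (by linarith)]; ring
  · rintro _ ⟨d, -, rfl⟩
    rcases le_total d (N / 3) with h | h
    · exact min_le_of_right_le (by linarith)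
    · exact min_le_of_left_le (by linarith)

lemma ite_third_le_eq_min (N d : ℝ) :
    (if N / 3 ≤ d then N - d else (N + d) / 2) = min (N - d) ((N + d) / 2) := by
  split_ifs with h
  · exact (min_eq_left (by linarith)).symm
  · exact (min_eq_right (by linarith)).symm

/-- In the large-N counting of quantum regions, the maximum number of quantum
regions over all links is N - Δ when Δ ≥ N/3 and (N + Δ)/2 when Δ ≤ N/3; the
maximum over Δ of this quantity is 2N/3, attained at Δ = N/3. -/
theorem stmt_10 (N Δ : ℝ) (hN : 0 < N) (h0 : 0 ≤ Δ) (hΔN : Δ ≤ N) :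
    IsGreatest (qcount N Δ '' Set.Icc (0 : ℝ) N)
      (if N / 3 ≤ Δ then N - Δ else (N + Δ) / 2) ∧
    IsGreatest ((fun d => if N / 3 ≤ d then N - d else (N + d) / 2) '' Set.Icc (0 : ℝ) N)
      (2 * N / 3) ∧
    (fun d => if N / 3 ≤ d then N - d else (N + d) / 2) (N / 3) = 2 * N / 3 := by
  simp only [ite_third_le_eq_min]
  refine ⟨isGreatest_qcount_image h0 hΔN, isGreatest_min_image hN.le, ?_⟩
  rw [min_eq_left (by linarith)]
  ring
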